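/- Let f : {0,1}ⁿ → ℝ satisfy condition (2.4) with constant v > 0, and let B = max over x ∈ {0,1}ⁿ and 1 ≤ i ≤ n of |f(x) − f(x^{(i)})|. Then for all real numbers b > a ≥ Mf (the median of f(X)) with P{f(X) ≥ b} > 0, one has b − a ≤ sqrt( (72/5)·v·P{f(X) ∈ (a − B, b)} / P{f(X) ≥ b} ) · ( log( e² / (2·P{f(X) ∈ (a − B, b)}) ) )^{−1/2}. -/

import Mathlib

/-!
Truncate `f` to `g = max a (min b f)`. As `a` is above the median, `Var g ≥ (b - a)² P{f ≥ b} / 2`.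
Decomposing `g` into martingale differences `d_k` along the coordinates and applying the
tensorised two-point log-Sobolev inequality to each `d_k` gives a Falik–Samorodnitsky inequality
`Var g · log (Var g / ∑ₖ (E|d_k|)²) ≤ ½ ∑ₖ E (g - g ∘ flip_k)²`. The truncation only moves on
`D = {a - B < f < b}`, so by (2.4) the right side is at most `v P(D)` and `∑ₖ (E|d_k|)² ≤ v P(D)²`.
Since `t ↦ t log (t / c)` is increasing, this caps `Var g`, and hence `b - a`.
-/

open scoped Classical
open Finset

/-- Probability of an event under the uniform distribution on `{0,1}ⁿ`. -/
noncomputable def prb {n : ℕ} (P : (Fin n → Fin 2) → Prop) : ℝ :=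
  ((Finset.univ.filter P).card : ℝ) / 2 ^ n

/-- `x^{(i)}`: flip the `i`-th bit of `x`. -/
noncomputable def flipBit {n : ℕ} (x : Fin n → Fin 2) (i : Fin n) : Fin n → Fin 2 :=
  Function.update x i (x i + 1)

/-- The `α`-quantile `Q_α = inf { z : P{f(X) ≤ z} ≥ α }`. -/
noncomputable def quant {n : ℕ} (f : (Fin n → Fin 2) → ℝ) (α : ℝ) : ℝ :=
  sInf {z : ℝ | α ≤ prb fun x => f x ≤ z}

/-- Expectation of `f(X)` for `X` uniform on `{0,1}ⁿ`. -/
noncomputable def expecb {n : ℕ} (f : (Fin n → Fin 2) → ℝ) : ℝ :=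
  (∑ x, f x) / 2 ^ n

/-- Variance of `f(X)` for `X` uniform on `{0,1}ⁿ`. -/
noncomputable def varb {n : ℕ} (f : (Fin n → Fin 2) → ℝ) : ℝ :=
  expecb fun x => (f x - expecb f) ^ 2

open Real
open scoped BigOperators

-- Gross's two-point inequality for `α, β` with mean `m` reads `grossFun (α / m) ≤ 2`.
noncomputable def grossFun (x : ℝ) : ℝ :=
  x * log x + (2 - x) * log (2 - x) + 2 * √(x * (2 - x))

lemma hasDerivAt_grossFun {x : ℝ} (hx : 0 < x) (hx2 : x < 2) :
    HasDerivAt grossFun (√(2 - x) / √x - (√(2 - x) / √x)⁻¹ - 2 * log (√(2 - x) / √x)) x := by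
  have h2x : 0 < 2 - x := by linarith
  have hlin : HasDerivAt (fun y : ℝ => 2 - y) (-1) x := by
    simpa using (hasDerivAt_id x).const_sub 2
  have hprod : HasDerivAt (fun y : ℝ => y * (2 - y)) (2 - 2 * x) x :=
    ((hasDerivAt_id' x).mul hlin).congr_deriv (by ring)
  have h := ((hasDerivAt_mul_log hx.ne').add ((hasDerivAt_mul_log h2x.ne').comp x hlin)).add
    ((hprod.sqrt (by positivity)).const_mul 2)
  refine HasDerivAt.congr_deriv (f := grossFun) h ?_
  have ha0 : 0 < √x := sqrt_pos.2 hx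
  have hb0 : 0 < √(2 - x) := sqrt_pos.2 h2x
  have hlog : ∀ {t : ℝ}, 0 < t → log t = 2 * log √t := fun ht => by
    rw [log_sqrt ht.le]; ring
  rw [log_div hb0.ne' ha0.ne', sqrt_mul hx.le, hlog hx, hlog h2x]
  field_simp
  rw [sq_sqrt hx.le, sq_sqrt h2x.le]
  ring

lemma continuous_grossFun : Continuous grossFun := by
  have h := continuous_mul_log.comp (continuous_sub_left (2 : ℝ))
  unfold grossFun
  fun_prop

lemma sub_inv_sub_two_mul_log {s : ℝ} (hs : 0 < s) :
    s - s⁻¹ - 2 * log s = 2 * (sinh (log s) - log s) := by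
  rw [sinh_eq, exp_neg, exp_log hs]
  ring

lemma grossFun_le_two {x : ℝ} (hx : x ∈ Set.Icc (0 : ℝ) 2) : grossFun x ≤ 2 := by
  have hF1 : grossFun 1 = 2 := by norm_num [grossFun]
  have hderiv : ∀ y ∈ Set.Ioo (0 : ℝ) 2, HasDerivAt grossFun
      (2 * (sinh (log (√(2 - y) / √y)) - log (√(2 - y) / √y))) y := fun y hy => by
    have := hasDerivAt_grossFun hy.1 hy.2
    rwa [sub_inv_sub_two_mul_log (div_pos (sqrt_pos.2 (by linarith [hy.2])) (sqrt_pos.2 hy.1))]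
      at this
  have hlog_nonneg : ∀ y ∈ Set.Ioo (0 : ℝ) 2, (0 ≤ log (√(2 - y) / √y) ↔ y ≤ 1) := by
    intro y hy
    rw [log_nonneg_iff (div_pos (sqrt_pos.2 (by linarith [hy.2])) (sqrt_pos.2 hy.1)),
      one_le_div (sqrt_pos.2 hy.1), sqrt_le_sqrt_iff (by linarith [hy.2])]
    constructor <;> intro h <;> linarith
  rw [← hF1]
  rcases le_total x 1 with hx1 | hx1
  · refine monotoneOn_of_deriv_nonneg (convex_Icc 0 1) continuous_grossFun.continuousOn
      ?_ ?_ ⟨hx.1, hx1⟩ ⟨zero_le_one, le_rfl⟩ hx1 <;> rw [interior_Icc] <;> intro y hy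
    · exact (hderiv y ⟨hy.1, by linarith [hy.2]⟩).differentiableAt.differentiableWithinAt
    · rw [(hderiv y ⟨hy.1, by linarith [hy.2]⟩).deriv]
      have := (hlog_nonneg y ⟨hy.1, by linarith [hy.2]⟩).2 hy.2.le
      linarith [self_le_sinh_iff.2 this]
  · refine antitoneOn_of_deriv_nonpos (convex_Icc 1 2) continuous_grossFun.continuousOn
      ?_ ?_ ⟨le_rfl, one_le_two⟩ ⟨hx1, hx.2⟩ hx1 <;> rw [interior_Icc] <;> intro y hy
    · exact (hderiv y ⟨by linarith [hy.1], hy.2⟩).differentiableAt.differentiableWithinAt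
    · rw [(hderiv y ⟨by linarith [hy.1], hy.2⟩).deriv]
      have := mt (hlog_nonneg y ⟨by linarith [hy.1], hy.2⟩).1 (not_le.2 hy.1)
      linarith [sinh_le_self_iff.2 (not_le.1 this).le]

lemma two_point_log_sobolev {α β : ℝ} (hα : 0 ≤ α) (hβ : 0 ≤ β) :
    (α * log α + β * log β) / 2 - (α + β) / 2 * log ((α + β) / 2) ≤ (√α - √β) ^ 2 / 2 := by
  set m := (α + β) / 2 with hm_def
  rcases (show 0 ≤ m by positivity).eq_or_lt with hm | hm
  · obtain ⟨rfl, rfl⟩ : α = 0 ∧ β = 0 := ⟨by linarith, by linarith⟩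
    simp [m]
  have hF := grossFun_le_two (x := α / m) ⟨by positivity, by rw [div_le_iff₀ hm]; linarith⟩
  have hβm : 2 - α / m = β / m := by field_simp; linarith
  have hmlog : ∀ t : ℝ, t / m * log (t / m) * m = t * log t - t * log m := fun t => by
    rcases eq_or_ne t 0 with rfl | ht
    · simp
    · rw [log_div ht hm.ne']; field_simp
  have hsqrt : √(α / m * (β / m)) * m = √α * √β := by
    rw [div_mul_div_comm, sqrt_div' _ (by positivity), sqrt_mul_self hm.le, sqrt_mul hα]
    field_simp
  unfold grossFun at hF
  rw [hβm] at hF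
  have hF' := mul_le_mul_of_nonneg_right hF hm.le
  rw [add_mul, add_mul, mul_assoc 2, hsqrt, hmlog, hmlog] at hF'
  have hsum : α * log m + β * log m = 2 * (m * log m) := by rw [hm_def]; ring
  nlinarith [sq_sqrt hα, sq_sqrt hβ]

lemma sum_mul_log_div_sum_le {ι : Type*} (s : Finset ι) {a b : ι → ℝ}
    (ha : ∀ i ∈ s, 0 ≤ a i) (hb : ∀ i ∈ s, 0 ≤ b i) (hab : ∀ i ∈ s, b i = 0 → a i = 0) :
    (∑ i ∈ s, a i) * log ((∑ i ∈ s, a i) / ∑ i ∈ s, b i) ≤ ∑ i ∈ s, a i * log (a i / b i) := by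
  set A := ∑ i ∈ s, a i
  set B := ∑ i ∈ s, b i
  rcases (sum_nonneg hb).eq_or_lt with hB | hB
  · have hA : A = 0 := sum_eq_zero fun i hi =>
      hab i hi ((sum_eq_zero_iff_of_nonneg hb).1 hB.symm i hi)
    rw [hA, zero_mul]
    exact sum_nonneg fun i hi => by
      rw [hab i hi ((sum_eq_zero_iff_of_nonneg hb).1 hB.symm i hi), zero_mul]
  -- `log x ≥ 1 - 1/x` at `x = a i * B / (b i * A)`, multiplied by `a i`
  have key : ∀ i ∈ s, a i * log (A / B) + (a i - b i * (A / B)) ≤ a i * log (a i / b i) := by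
    intro i hi
    rcases (ha i hi).eq_or_lt with hai | hai
    · rw [← hai]
      nlinarith [hb i hi, div_nonneg (sum_nonneg ha) hB.le]
    have hbi : 0 < b i := (hb i hi).lt_of_ne fun h => hai.ne' (hab i hi h.symm)
    have hA : 0 < A := sum_pos' ha ⟨i, hi, hai⟩
    have hlog := one_sub_inv_le_log_of_pos (x := a i / b i / (A / B)) (by positivity)
    rw [log_div (by positivity) (by positivity)] at hlog
    have := mul_le_mul_of_nonneg_left hlog hai.le
    field_simp at this ⊢
    linarith
  calc A * log (A / B) = ∑ i ∈ s, (a i * log (A / B) + (a i - b i * (A / B))) := by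
        rw [sum_add_distrib, sum_sub_distrib, ← sum_mul, ← sum_mul]
        change _ = A * log (A / B) + (A - B * (A / B))
        rw [mul_div_cancel₀ _ hB.ne']
        ring
    _ ≤ _ := sum_le_sum key

lemma le_of_mul_log_div_le {c t V w : ℝ} (hc : 0 < c) (ht : 0 < t) (hlog : -1 ≤ log (t / c))
    (hw : w < t * log (t / c)) (hV : V * log (V / c) ≤ w) : V ≤ t := by
  by_contra! htV
  have hV0 : 0 < V := ht.trans htV
  -- `x ↦ x log (x / c)` increases beyond `c / e`, where its derivative `log (x / c) + 1` is ≥ 0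
  have hgrowth : V - t ≤ V * (log (V / c) - log (t / c)) := by
    rw [← log_div (by positivity) (by positivity), div_div_div_cancel_right₀ hc.ne']
    have := one_sub_inv_le_log_of_pos (div_pos hV0 ht)
    rw [inv_div] at this
    have := mul_le_mul_of_nonneg_left this hV0.le
    rwa [mul_sub, mul_one, mul_div_cancel₀ _ hV0.ne'] at this
  nlinarith

lemma log_le_half_self {x : ℝ} (hx : 0 < x) : log x ≤ x / 2 := by
  have h := log_le_sub_one_of_pos (x := x / exp 1) (by positivity)
  rw [log_div hx.ne' (exp_pos 1).ne', log_exp] at h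
  have := div_le_div_of_nonneg_left hx.le two_pos (by linarith [add_one_le_exp 1] : 2 ≤ exp 1)
  linarith

lemma two_lt_log_seventy_two_fifths : 2 < log (72 / 5) := by
  rw [lt_log_iff_exp_lt (by norm_num), show (2 : ℝ) = 1 + 1 by norm_num, exp_add]
  nlinarith [exp_one_lt_d9, exp_pos 1]

lemma log_exp_two_div_eq {p : ℝ} (hp : 0 < p) : log (exp 2 / (2 * p)) = 2 - log (2 * p) := by
  rw [log_div (exp_pos 2).ne' (by positivity), log_exp]

lemma log_exp_two_div_pos {p : ℝ} (hp : 0 < p) (hp1 : p ≤ 1) : 0 < log (exp 2 / (2 * p)) := by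
  have := log_le_log (by positivity) (by linarith : 2 * p ≤ 2)
  linarith [log_exp_two_div_eq hp, log_two_lt_d9]

lemma mul_log_exp_two_div_le {V v p : ℝ} (hv : 0 < v) (hp : 0 < p) (hp1 : p ≤ 1)
    (hV : V * log (V / (v * p ^ 2)) ≤ v * p) :
    V * log (exp 2 / (2 * p)) ≤ 36 / 5 * v * p := by
  have hL := log_exp_two_div_eq hp
  have hL0 := log_exp_two_div_pos hp hp1
  set L := log (exp 2 / (2 * p))
  -- `V` is compared with `t = 36 v p / (5 L)`, for which `t log (t / (v p²)) > v p`.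
  have hlog : log (36 / 5 * v * p / L / (v * p ^ 2)) = L - log L + (log (72 / 5) - 2) := by
    rw [show 36 / 5 * v * p / L / (v * p ^ 2) = 72 / 5 / (2 * p) / L by field_simp; ring,
      log_div (by positivity) hL0.ne', log_div (by norm_num) (by positivity)]
    linarith
  have := le_of_mul_log_div_le (t := 36 / 5 * v * p / L) (w := v * p) (by positivity)
    (by positivity) (by linarith [log_le_half_self hL0, two_lt_log_seventy_two_fifths]) ?_ hV
  · rwa [le_div_iff₀ hL0] at this
  rw [hlog, div_mul_eq_mul_div, lt_div_iff₀ hL0]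
  nlinarith [log_le_half_self hL0, two_lt_log_seventy_two_fifths, mul_pos hv hp]

lemma le_sqrt_div_mul_rpow_neg_half {θ K q L : ℝ} (hq : 0 < q) (hL : 0 < L)
    (h : θ ^ 2 * q * L ≤ K) : θ ≤ √(K / q) * L ^ (-(1 / 2) : ℝ) := by
  rw [rpow_neg hL.le, ← sqrt_eq_rpow, ← div_eq_mul_inv, le_div_iff₀ (sqrt_pos.2 hL)]
  refine (le_abs_self _).trans (abs_le_sqrt ?_)
  rw [mul_pow, sq_sqrt hL.le, le_div_iff₀ hq]
  linarith

-- Truncation to `[a, b]` is monotone and 1-Lipschitz, and it is constant on `(-∞, a]` and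
-- on `[b, ∞)`: a step of length `≤ B` from a point outside `(a - B, b)` cannot lower it.
lemma negPart_clip_sub_clip_le {a b B s t : ℝ} (hab : a ≤ b) (hst : |s - t| ≤ B) :
    max (-(max a (min b s) - max a (min b t))) 0 ≤
      (if a - B < s ∧ s < b then 1 else 0) * max (-(s - t)) 0 := by
  have := abs_le.1 hst
  split_ifs with h
  · rw [one_mul]
    simp only [max_def, min_def]
    split_ifs <;> linarith
  · rw [zero_mul, max_le_iff, neg_sub, sub_nonpos]
    refine ⟨?_, le_rfl⟩
    simp only [not_and_or, not_lt] at h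
    simp only [max_def, min_def]
    split_ifs <;> rcases h with h | h <;> linarith

section UniformExpectation

variable {ι : Type*} [Fintype ι]

noncomputable def ent (h : ι → ℝ) : ℝ :=
  𝔼 i, h i * log (h i) - (𝔼 i, h i) * log (𝔼 i, h i)

lemma sqrt_expect_sq_sub_sqrt_expect_sq_sq_le (u w : ι → ℝ) :
    (√(𝔼 i, u i ^ 2) - √(𝔼 i, w i ^ 2)) ^ 2 ≤ 𝔼 i, (u i - w i) ^ 2 := by
  have hu : 0 ≤ 𝔼 i, u i ^ 2 := expect_nonneg fun i _ => sq_nonneg _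
  have hw : 0 ≤ 𝔼 i, w i ^ 2 := expect_nonneg fun i _ => sq_nonneg _
  have hcs : 𝔼 i, u i * w i ≤ √(𝔼 i, u i ^ 2) * √(𝔼 i, w i ^ 2) := by
    rw [← sqrt_mul hu]
    exact le_sqrt_of_sq_le (expect_mul_sq_le_sq_mul_sq _ _ _)
  have hexp : 𝔼 i, (u i - w i) ^ 2 = 𝔼 i, u i ^ 2 + 𝔼 i, w i ^ 2 - 2 * 𝔼 i, u i * w i := by
    simp only [sub_sq, expect_add_distrib, expect_sub_distrib, mul_assoc, ← mul_expect]
    ring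
  nlinarith [sq_sqrt hu, sq_sqrt hw]

-- `log t ≥ 1 - 1/t` at `t = |y| c / m`, multiplied by `2 y ^ 2`
lemma two_mul_sq_sub_le_sq_mul_log (y : ℝ) {m c : ℝ} (hm : 0 < m) (hc : 0 < c) :
    2 * (y ^ 2 - m / c * |y|) ≤ y ^ 2 * log (y ^ 2) + y ^ 2 * (2 * log c - 2 * log m) := by
  rcases eq_or_ne y 0 with rfl | hy
  · simp
  have hay : 0 < |y| := abs_pos.2 hy
  have hlog := one_sub_inv_le_log_of_pos (x := |y| * c / m) (by positivity)
  rw [log_div (by positivity) hm.ne', log_mul hay.ne' hc.ne'] at hlog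
  rw [inv_div] at hlog
  have := mul_le_mul_of_nonneg_left hlog (by positivity : 0 ≤ 2 * |y| ^ 2)
  rw [← sq_abs y, log_pow]
  calc 2 * (|y| ^ 2 - m / c * |y|) = 2 * |y| ^ 2 * (1 - m / (|y| * c)) := by field_simp
    _ ≤ _ := this
    _ = _ := by push_cast; ring

lemma expect_sq_mul_log_le_ent (h : ι → ℝ) :
    (𝔼 i, h i ^ 2) * log ((𝔼 i, h i ^ 2) / (𝔼 i, |h i|) ^ 2) ≤ ent fun i => h i ^ 2 := by
  rcases (expect_nonneg fun i _ => sq_nonneg (h i) : 0 ≤ 𝔼 i, h i ^ 2).eq_or_lt with hm | hm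
  · have h0 : ∀ i, h i = 0 := fun i => by
      have := (Fintype.expect_eq_zero_iff_of_nonneg fun i => sq_nonneg (h i)).1 hm.symm
      simpa using congrFun this i
    simp [ent, h0]
  have hc : 0 < 𝔼 i, |h i| := by
    refine expect_pos' (fun i _ => abs_nonneg _) ?_
    obtain ⟨i, -, hi⟩ := exists_ne_zero_of_expect_ne_zero hm.ne'
    exact ⟨i, mem_univ _, abs_pos.2 (by simpa using hi)⟩
  have hsum := expect_le_expect fun i (_ : i ∈ univ) => two_mul_sq_sub_le_sq_mul_log (h i) hm hc
  simp only [← mul_expect, expect_add_distrib, expect_sub_distrib, ← expect_mul] at hsum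
  rw [ent, log_div hm.ne' (by positivity), log_pow]
  field_simp at hsum
  push_cast
  nlinarith

lemma expect_sq_eq_zero_of_expect_abs_eq_zero {h : ι → ℝ}
    (h0 : 𝔼 i, |h i| = 0) : 𝔼 i, h i ^ 2 = 0 := by
  have := (Fintype.expect_eq_zero_iff_of_nonneg fun i => abs_nonneg (h i)).1 h0
  simp [fun i => abs_eq_zero.1 (congrFun this i)]

end UniformExpectation

section Variance

variable {ι : Type*} [Fintype ι] [Nonempty ι]

lemma expect_sq_sub_sq_expect_eq_expect_expect (g : ι → ℝ) :
    𝔼 i, g i ^ 2 - (𝔼 i, g i) ^ 2 = (𝔼 i, 𝔼 j, (g i - g j) ^ 2) / 2 := by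
  simp only [sub_sq, expect_add_distrib, expect_sub_distrib, Fintype.expect_const, mul_assoc,
    ← mul_expect, ← expect_mul]
  ring

lemma sq_mul_expect_mul_expect_le_var {g : ι → ℝ} {a b : ℝ} {A L : ι → Prop} (hab : a < b)
    (hA : ∀ i, A i → b ≤ g i) (hL : ∀ i, L i → g i ≤ a) :
    (b - a) ^ 2 * (𝔼 i, if A i then (1 : ℝ) else 0) * (𝔼 i, if L i then (1 : ℝ) else 0) ≤
      𝔼 i, g i ^ 2 - (𝔼 i, g i) ^ 2 := by
  have key : ∀ i j, (b - a) ^ 2 * ((if A i then (1 : ℝ) else 0) * (if L j then 1 else 0) +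
      (if L i then 1 else 0) * (if A j then 1 else 0)) ≤ (g i - g j) ^ 2 := fun i j => by
    rw [ite_zero_mul_ite_zero, ite_zero_mul_ite_zero, one_mul]
    split_ifs with h1 h2 h2
    · exact absurd (hA i h1.1) (not_le.2 ((hL i h2.1).trans_lt hab))
    · nlinarith [hA i h1.1, hL j h1.2]
    · nlinarith [hL i h2.1, hA j h2.2]
    · simp only [add_zero, mul_zero]; positivity
  rw [expect_sq_sub_sq_expect_eq_expect_expect]
  have := expect_le_expect fun i (_ : i ∈ univ) => expect_le_expect fun j (_ : j ∈ univ) => key i j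
  simp only [← mul_expect, expect_add_distrib, ← expect_mul] at this
  nlinarith

end Variance

section Cube

variable {n : ℕ}

lemma flipBit_apply_self (x : Fin n → Fin 2) (k : Fin n) : flipBit x k k = x k + 1 := by
  simp [flipBit]

lemma flipBit_apply_of_ne (x : Fin n → Fin 2) {j k : Fin n} (h : j ≠ k) :
    flipBit x k j = x j := by
  simp [flipBit, h]

@[simp]
lemma flipBit_flipBit (x : Fin n → Fin 2) (k : Fin n) : flipBit (flipBit x k) k = x := by
  ext j
  rcases eq_or_ne j k with rfl | h
  · rw [flipBit_apply_self, flipBit_apply_self]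
    generalize x j = c
    fin_cases c <;> rfl
  · rw [flipBit_apply_of_ne _ h, flipBit_apply_of_ne _ h]

lemma expect_comp_flipBit (k : Fin n) (h : (Fin n → Fin 2) → ℝ) :
    𝔼 x, h (flipBit x k) = 𝔼 x, h x :=
  Fintype.expect_bijective _ (Function.Involutive.bijective (flipBit_flipBit · k)) _ _
    fun _ => rfl

lemma expect_add_comp_flipBit_div_two (k : Fin n) (h : (Fin n → Fin 2) → ℝ) :
    𝔼 x, (h x + h (flipBit x k)) / 2 = 𝔼 x, h x := by
  rw [← expect_div, expect_add_distrib, expect_comp_flipBit]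
  ring

lemma add_comp_update_add_one (h : (Fin n → Fin 2) → ℝ) (z : Fin n → Fin 2) (k : Fin n)
    (c : Fin 2) :
    h (Function.update z k c) + h (Function.update z k (c + 1)) = h z + h (flipBit z k) := by
  have hc : c = z k ∨ c = z k + 1 := by
    generalize z k = d
    fin_cases c <;> fin_cases d <;> simp
  rcases hc with rfl | rfl
  · rw [Function.update_eq_self]; rfl
  · rw [add_comm, show z k + 1 + 1 = z k by
      generalize z k = d; fin_cases d <;> rfl, Function.update_eq_self]
    rfl

lemma prb_nonneg (P : (Fin n → Fin 2) → Prop) : 0 ≤ prb P := by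
  unfold prb
  positivity

lemma prb_eq_expect (P : (Fin n → Fin 2) → Prop) [DecidablePred P] :
    prb P = 𝔼 x, if P x then (1 : ℝ) else 0 := by
  simp only [prb, Fintype.expect_eq_sum_div_card, sum_boole, Fintype.card_fun, Fintype.card_fin]
  push_cast
  congr 3
  ext
  simp

lemma expect_comp_neg_sub_flipBit (φ : ℝ → ℝ) (u : (Fin n → Fin 2) → ℝ) (k : Fin n) :
    𝔼 x, φ (-(u x - u (flipBit x k))) = 𝔼 x, φ (u x - u (flipBit x k)) := by
  rw [← expect_comp_flipBit k]
  simp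

lemma expect_abs_sub_flipBit (u : (Fin n → Fin 2) → ℝ) (k : Fin n) :
    𝔼 x, |u x - u (flipBit x k)| = 2 * 𝔼 x, max (-(u x - u (flipBit x k))) 0 := by
  have := expect_comp_neg_sub_flipBit (fun s => max (-s) 0) u k
  simp only [neg_neg] at this
  simp_rw [← max_zero_add_max_neg_zero_eq_abs_self, expect_add_distrib, this]
  ring

lemma expect_sq_sub_flipBit (u : (Fin n → Fin 2) → ℝ) (k : Fin n) :
    𝔼 x, (u x - u (flipBit x k)) ^ 2 = 2 * 𝔼 x, max (-(u x - u (flipBit x k))) 0 ^ 2 := by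
  have := expect_comp_neg_sub_flipBit (fun s => max (-s) 0 ^ 2) u k
  simp only [neg_neg] at this
  have hsq : ∀ s : ℝ, s ^ 2 = max s 0 ^ 2 + max (-s) 0 ^ 2 := fun s => by
    rcases le_total s 0 with h | h
    · rw [max_eq_right h, max_eq_left (neg_nonneg.2 h)]; ring
    · rw [max_eq_left h, max_eq_right (neg_nonpos.2 h)]; ring
  simp_rw [hsq (_ - _), expect_add_distrib, this]
  ring

lemma prb_mono {P Q : (Fin n → Fin 2) → Prop} (h : ∀ x, P x → Q x) : prb P ≤ prb Q := by
  rw [prb_eq_expect, prb_eq_expect]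
  exact expect_le_expect fun x _ => by split_ifs with hP hQ <;> simp_all

lemma prb_of_forall {P : (Fin n → Fin 2) → Prop} (h : ∀ x, P x) : prb P = 1 := by
  simp [prb_eq_expect, h]

lemma prb_le_one (P : (Fin n → Fin 2) → Prop) : prb P ≤ 1 :=
  (prb_mono fun _ _ => trivial).trans_eq (prb_of_forall fun _ => trivial)

end Cube

section CondAvg

variable {n : ℕ}

def splice (i : ℕ) (x z : Fin n → Fin 2) : Fin n → Fin 2 :=
  fun j => if (j : ℕ) < i then x j else z j

-- The conditional expectation of `g` given the first `i` coordinates, evaluated at `x`.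
noncomputable def condAvg (i : ℕ) (g : (Fin n → Fin 2) → ℝ) (x : Fin n → Fin 2) : ℝ :=
  𝔼 z, g (splice i x z)

lemma condAvg_of_le {i : ℕ} (hi : n ≤ i) (g : (Fin n → Fin 2) → ℝ) (x : Fin n → Fin 2) :
    condAvg i g x = g x := by
  have : ∀ z, splice i x z = x := fun z => funext fun j => if_pos (j.2.trans_le hi)
  simp [condAvg, this]

lemma condAvg_zero (g : (Fin n → Fin 2) → ℝ) (x : Fin n → Fin 2) :
    condAvg 0 g x = 𝔼 y, g y := by
  have : ∀ z, splice 0 x z = z := fun z => funext fun j => if_neg (Nat.not_lt_zero _)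
  simp [condAvg, this]

lemma condAvg_sub (i : ℕ) (g h : (Fin n → Fin 2) → ℝ) (x : Fin n → Fin 2) :
    condAvg i (fun y => g y - h y) x = condAvg i g x - condAvg i h x :=
  expect_sub_distrib _ _ _

lemma condAvg_flipBit (i : ℕ) (k : Fin n) (g : (Fin n → Fin 2) → ℝ) (x : Fin n → Fin 2) :
    condAvg i g (flipBit x k) = condAvg i (fun y => g (flipBit y k)) x := by
  unfold condAvg
  by_cases hk : (k : ℕ) < i
  · refine expect_congr rfl fun z _ => congrArg g (funext fun j => ?_)
    by_cases hj : j = k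
    · subst hj; simp [splice, hk, flipBit_apply_self]
    · simp [splice, flipBit_apply_of_ne _ hj]
  · rw [← expect_comp_flipBit k]
    refine expect_congr rfl fun z _ => congrArg g (funext fun j => ?_)
    by_cases hj : j = k
    · subst hj; simp [splice, hk, flipBit_apply_self]
    · simp [splice, flipBit_apply_of_ne _ hj]

lemma splice_succ {y : Fin n → Fin 2} (x z : Fin n → Fin 2) (k : Fin n)
    (hy : ∀ j : Fin n, j < k → y j = x j) :
    splice (k + 1) y z = splice k x (Function.update z k (y k)) := by
  ext j
  simp only [splice, Function.update_apply]
  rcases lt_trichotomy j k with hj | rfl | hj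
  · simp [hj, Nat.lt_succ_of_lt (Fin.lt_def.1 hj), hy j hj]
  · simp
  · simp [hj.ne', Nat.not_lt.2 (Fin.lt_def.1 hj).le, Nat.not_lt.2 (Fin.lt_def.1 hj)]

lemma condAvg_succ (k : Fin n) (g : (Fin n → Fin 2) → ℝ) (x : Fin n → Fin 2) :
    condAvg k g x = (condAvg (k + 1) g x + condAvg (k + 1) g (flipBit x k)) / 2 := by
  have hflip : ∀ j : Fin n, j < k → flipBit x k j = x j := fun j hj =>
    flipBit_apply_of_ne _ hj.ne
  simp only [condAvg, splice_succ x _ k fun _ _ => rfl, splice_succ x _ k hflip,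
    flipBit_apply_self, ← expect_add_distrib, expect_div,
    add_comp_update_add_one (fun z => g (splice k x z))]
  exact (expect_add_comp_flipBit_div_two k _).symm

lemma expect_condAvg (i : ℕ) (g : (Fin n → Fin 2) → ℝ) :
    𝔼 x, condAvg i g x = 𝔼 x, g x := by
  induction hd : n - i generalizing i with
  | zero => simp_rw [condAvg_of_le (Nat.sub_eq_zero_iff_le.1 hd)]
  | succ d ih =>
    have hi : i < n := by omega
    have hsucc := condAvg_succ ⟨i, hi⟩ g
    simp only at hsucc
    simp_rw [hsucc, expect_add_comp_flipBit_div_two]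
    exact ih (i + 1) (by omega)

noncomputable def martDiff (k : Fin n) (g : (Fin n → Fin 2) → ℝ) (x : Fin n → Fin 2) : ℝ :=
  condAvg (k + 1) g x - condAvg k g x

lemma martDiff_eq_condAvg (k : Fin n) (g : (Fin n → Fin 2) → ℝ) (x : Fin n → Fin 2) :
    martDiff k g x = condAvg (k + 1) (fun y => g y - g (flipBit y k)) x / 2 := by
  rw [martDiff, condAvg_succ k g x, condAvg_sub, ← condAvg_flipBit]
  ring

lemma martDiff_sub_martDiff_flipBit (j k : Fin n) (g : (Fin n → Fin 2) → ℝ)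
    (x : Fin n → Fin 2) :
    martDiff k g x - martDiff k g (flipBit x j) =
      martDiff k (fun y => g y - g (flipBit y j)) x := by
  simp only [martDiff, condAvg_flipBit, condAvg_sub]
  ring

-- Telescoping along the martingale `condAvg 0 g, …, condAvg n g` of the cube.
lemma expect_comp_sub_comp_expect (Ψ : ℝ → ℝ) (g : (Fin n → Fin 2) → ℝ) :
    𝔼 x, Ψ (g x) - Ψ (𝔼 x, g x) = ∑ k : Fin n, 𝔼 x,
      ((Ψ (condAvg (k + 1) g x) + Ψ (condAvg (k + 1) g (flipBit x k))) / 2 -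
        Ψ ((condAvg (k + 1) g x + condAvg (k + 1) g (flipBit x k)) / 2)) := by
  have step : ∀ k : Fin n, 𝔼 x,
      ((Ψ (condAvg (k + 1) g x) + Ψ (condAvg (k + 1) g (flipBit x k))) / 2 -
        Ψ ((condAvg (k + 1) g x + condAvg (k + 1) g (flipBit x k)) / 2)) =
      𝔼 x, Ψ (condAvg (k + 1) g x) - 𝔼 x, Ψ (condAvg k g x) := fun k => by
    rw [expect_sub_distrib, expect_add_comp_flipBit_div_two (h := fun x => Ψ (condAvg (k + 1) g x))]
    simp_rw [← condAvg_succ]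
  simp_rw [step]
  rw [Fin.sum_univ_eq_sum_range (fun i => 𝔼 x, Ψ (condAvg (i + 1) g x) - 𝔼 x, Ψ (condAvg i g x)),
    sum_range_sub (fun i => 𝔼 x, Ψ (condAvg i g x))]
  simp [condAvg_of_le le_rfl, condAvg_zero]

lemma expect_sq_sub_sq_expect_eq_sum_martDiff (g : (Fin n → Fin 2) → ℝ) :
    𝔼 x, g x ^ 2 - (𝔼 x, g x) ^ 2 = ∑ k : Fin n, 𝔼 x, martDiff k g x ^ 2 := by
  rw [expect_comp_sub_comp_expect (· ^ 2)]
  refine sum_congr rfl fun k _ => expect_congr rfl fun x _ => ?_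
  rw [martDiff, condAvg_succ k g x]
  ring

lemma ent_sq_le_sum_expect_sq_sub_flipBit (V : (Fin n → Fin 2) → ℝ) :
    ent (fun x => V x ^ 2) ≤ 1 / 2 * ∑ k : Fin n, 𝔼 x, (V x - V (flipBit x k)) ^ 2 := by
  rw [ent, expect_comp_sub_comp_expect (fun t => t * log t), mul_sum]
  refine sum_le_sum fun k _ => ?_
  set A := condAvg (k + 1) (fun y => V y ^ 2)
  have hA : ∀ x, 0 ≤ A x := fun x => expect_nonneg fun _ _ => sq_nonneg _
  have hmink : ∀ x, (√(A x) - √(A (flipBit x k))) ^ 2 ≤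
      condAvg (k + 1) (fun y => (V y - V (flipBit y k)) ^ 2) x := fun x => by
    simp only [A, condAvg_flipBit]
    exact sqrt_expect_sq_sub_sqrt_expect_sq_sq_le _ _
  calc _ ≤ 𝔼 x, (√(A x) - √(A (flipBit x k))) ^ 2 / 2 :=
        expect_le_expect fun x _ => two_point_log_sobolev (hA x) (hA _)
    _ ≤ 𝔼 x, condAvg (k + 1) (fun y => (V y - V (flipBit y k)) ^ 2) x / 2 :=
        expect_le_expect fun x _ => by gcongr; exact hmink x
    _ = _ := by rw [← expect_div, expect_condAvg]; ring

end CondAvg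

section FalikSamorodnitsky

variable {n : ℕ}

lemma sum_ent_martDiff_le (g : (Fin n → Fin 2) → ℝ) :
    ∑ k : Fin n, ent (fun x => martDiff k g x ^ 2) ≤
      1 / 2 * ∑ j : Fin n, 𝔼 x, (g x - g (flipBit x j)) ^ 2 := by
  calc ∑ k : Fin n, ent (fun x => martDiff k g x ^ 2)
      ≤ ∑ k : Fin n, 1 / 2 * ∑ j : Fin n, 𝔼 x, (martDiff k g x - martDiff k g (flipBit x j)) ^ 2 :=
        sum_le_sum fun k _ => ent_sq_le_sum_expect_sq_sub_flipBit _
    _ = 1 / 2 * ∑ j : Fin n, (𝔼 x, (g x - g (flipBit x j)) ^ 2 -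
          (𝔼 x, (g x - g (flipBit x j))) ^ 2) := by
        simp_rw [← mul_sum, martDiff_sub_martDiff_flipBit, expect_sq_sub_sq_expect_eq_sum_martDiff]
        rw [sum_comm]
    _ ≤ _ := by gcongr; nlinarith

lemma sum_sq_expect_abs_martDiff_pos {g : (Fin n → Fin 2) → ℝ}
    (hvar : 0 < 𝔼 x, g x ^ 2 - (𝔼 x, g x) ^ 2) :
    0 < ∑ k : Fin n, (𝔼 x, |martDiff k g x|) ^ 2 := by
  refine (sum_nonneg fun k _ => sq_nonneg _).lt_of_ne fun h => hvar.ne' ?_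
  rw [expect_sq_sub_sq_expect_eq_sum_martDiff]
  refine sum_eq_zero fun k hk => expect_sq_eq_zero_of_expect_abs_eq_zero ?_
  exact pow_eq_zero_iff two_ne_zero |>.1 <|
    (sum_eq_zero_iff_of_nonneg fun k _ => sq_nonneg _).1 h.symm k hk

theorem falik_samorodnitsky {g : (Fin n → Fin 2) → ℝ} {c : ℝ}
    (hvar : 0 < 𝔼 x, g x ^ 2 - (𝔼 x, g x) ^ 2)
    (hc : ∑ k : Fin n, (𝔼 x, |martDiff k g x|) ^ 2 ≤ c) :
    (𝔼 x, g x ^ 2 - (𝔼 x, g x) ^ 2) * log ((𝔼 x, g x ^ 2 - (𝔼 x, g x) ^ 2) / c) ≤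
      1 / 2 * ∑ j : Fin n, 𝔼 x, (g x - g (flipBit x j)) ^ 2 := by
  have hpos := sum_sq_expect_abs_martDiff_pos hvar
  calc _ ≤ (𝔼 x, g x ^ 2 - (𝔼 x, g x) ^ 2) *
        log ((𝔼 x, g x ^ 2 - (𝔼 x, g x) ^ 2) / ∑ k : Fin n, (𝔼 x, |martDiff k g x|) ^ 2) := by
        gcongr
        exact div_pos hvar (hpos.trans_le hc)
    _ ≤ ∑ k : Fin n, (𝔼 x, martDiff k g x ^ 2) *
          log ((𝔼 x, martDiff k g x ^ 2) / (𝔼 x, |martDiff k g x|) ^ 2) := by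
        rw [expect_sq_sub_sq_expect_eq_sum_martDiff]
        exact sum_mul_log_div_sum_le _ (fun k _ => expect_nonneg fun _ _ => sq_nonneg _)
          (fun k _ => sq_nonneg _) fun k _ h =>
            expect_sq_eq_zero_of_expect_abs_eq_zero (pow_eq_zero_iff two_ne_zero |>.1 h)
    _ ≤ ∑ k : Fin n, ent (fun x => martDiff k g x ^ 2) :=
        sum_le_sum fun k _ => expect_sq_mul_log_le_ent _
    _ ≤ _ := sum_ent_martDiff_le g

end FalikSamorodnitsky

section Truncation

variable {n : ℕ} {f : (Fin n → Fin 2) → ℝ} {v : ℝ}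

lemma expect_indicator_mul_sum_negPart_sq_le
    (hcond : ∀ x, ∑ i, (max (-(f x - f (flipBit x i))) 0) ^ 2 ≤ v) (D : (Fin n → Fin 2) → Prop)
    [DecidablePred D] :
    𝔼 x, (if D x then (1 : ℝ) else 0) * ∑ i, (max (-(f x - f (flipBit x i))) 0) ^ 2 ≤
      v * prb D := by
  rw [prb_eq_expect, mul_expect]
  refine expect_le_expect fun x _ => ?_
  split_ifs
  · rw [one_mul, mul_one]
    exact hcond x
  · simp

variable {a b B : ℝ}

lemma sum_expect_sq_sub_flipBit_clip_le (hab : a ≤ b)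
    (hB : ∀ x i, |f x - f (flipBit x i)| ≤ B)
    (hcond : ∀ x, ∑ i, (max (-(f x - f (flipBit x i))) 0) ^ 2 ≤ v) :
    ∑ i : Fin n, 𝔼 x, (max a (min b (f x)) - max a (min b (f (flipBit x i)))) ^ 2 ≤
      2 * (v * prb fun x => a - B < f x ∧ f x < b) := by
  calc _ = ∑ i : Fin n, 2 * 𝔼 x,
        max (-(max a (min b (f x)) - max a (min b (f (flipBit x i))))) 0 ^ 2 :=
        sum_congr rfl fun i _ => expect_sq_sub_flipBit (fun x => max a (min b (f x))) i
    _ ≤ ∑ i : Fin n, 2 * 𝔼 x,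
        (if a - B < f x ∧ f x < b then 1 else 0) * max (-(f x - f (flipBit x i))) 0 ^ 2 := by
        gcongr with i _ x _
        refine (pow_le_pow_left₀ (le_max_right _ _)
          (negPart_clip_sub_clip_le hab (hB x i)) 2).trans ?_
        split_ifs <;> simp
    _ = 2 * 𝔼 x, (if a - B < f x ∧ f x < b then 1 else 0) *
        ∑ i, max (-(f x - f (flipBit x i))) 0 ^ 2 := by
        rw [← mul_sum, ← expect_sum_comm]
        simp_rw [mul_sum]
    _ ≤ _ := by
        gcongr
        exact expect_indicator_mul_sum_negPart_sq_le hcond _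

lemma sum_sq_expect_abs_martDiff_clip_le (hab : a ≤ b)
    (hB : ∀ x i, |f x - f (flipBit x i)| ≤ B)
    (hcond : ∀ x, ∑ i, (max (-(f x - f (flipBit x i))) 0) ^ 2 ≤ v) :
    ∑ k : Fin n, (𝔼 x, |martDiff k (fun y => max a (min b (f y))) x|) ^ 2 ≤
      v * (prb fun x => a - B < f x ∧ f x < b) ^ 2 := by
  set χ : (Fin n → Fin 2) → ℝ := fun x => if a - B < f x ∧ f x < b then 1 else 0
  have hχ : ∀ x, χ x ^ 2 = χ x := fun x => by simp only [χ]; split_ifs <;> simp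
  have hstep : ∀ k : Fin n, 𝔼 x, |martDiff k (fun y => max a (min b (f y))) x| ≤
      𝔼 x, χ x * max (-(f x - f (flipBit x k))) 0 := fun k => calc
    _ ≤ 𝔼 x, condAvg (k + 1)
          (fun y => |max a (min b (f y)) - max a (min b (f (flipBit y k)))|) x / 2 := by
        refine expect_le_expect fun x _ => ?_
        rw [martDiff_eq_condAvg, abs_div, abs_two]
        gcongr
        exact abs_expect_le _ _
    _ = 𝔼 x, max (-(max a (min b (f x)) - max a (min b (f (flipBit x k))))) 0 := by
        rw [← expect_div, expect_condAvg, expect_abs_sub_flipBit (fun y => max a (min b (f y)))]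
        ring
    _ ≤ _ := expect_le_expect fun x _ => negPart_clip_sub_clip_le hab (hB x k)
  have hcs : ∀ k : Fin n, (𝔼 x, χ x * max (-(f x - f (flipBit x k))) 0) ^ 2 ≤
      (prb fun x => a - B < f x ∧ f x < b) *
        𝔼 x, χ x * max (-(f x - f (flipBit x k))) 0 ^ 2 := fun k => by
    have := expect_mul_sq_le_sq_mul_sq univ χ fun x => χ x * max (-(f x - f (flipBit x k))) 0
    simp only [mul_pow, hχ, ← mul_assoc, ← sq] at this
    rwa [prb_eq_expect]
  calc _ ≤ ∑ k : Fin n, (prb fun x => a - B < f x ∧ f x < b) *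
        𝔼 x, χ x * max (-(f x - f (flipBit x k))) 0 ^ 2 :=
        sum_le_sum fun k _ => (pow_le_pow_left₀ (expect_nonneg fun _ _ => abs_nonneg _)
          (hstep k) 2).trans (hcs k)
    _ = (prb fun x => a - B < f x ∧ f x < b) * 𝔼 x, χ x *
        ∑ k, max (-(f x - f (flipBit x k))) 0 ^ 2 := by
        rw [← mul_sum, ← expect_sum_comm]
        simp_rw [mul_sum]
    _ ≤ (prb fun x => a - B < f x ∧ f x < b) * (v * prb fun x => a - B < f x ∧ f x < b) := by
        gcongr
        · exact prb_nonneg _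
        · exact expect_indicator_mul_sum_negPart_sq_le hcond _
    _ = _ := by ring

end Truncation

section Median

variable {n : ℕ}

-- Since `f` takes finitely many values, `z ↦ P{f ≤ z}` is constant just above `a`.
lemma half_le_prb_le_of_quant_le {f : (Fin n → Fin 2) → ℝ} {a : ℝ} (ha : quant f (1 / 2) ≤ a) :
    1 / 2 ≤ prb fun x => f x ≤ a := by
  by_contra! h
  obtain ⟨x₀, hx₀, hmin⟩ := exists_min_image (univ.filter fun x => a < f x) f <| by
    by_contra hT
    rw [not_nonempty_iff_eq_empty, filter_eq_empty_iff] at hT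
    rw [prb_of_forall fun x => not_lt.1 (hT (mem_univ x))] at h
    norm_num at h
  have hS : ∀ z ∈ {z : ℝ | 1 / 2 ≤ prb fun x => f x ≤ z}, f x₀ ≤ z := fun z hz => by
    by_contra! hz₀
    refine (hz.trans_lt ((prb_mono fun x hx => ?_).trans_lt h)).false
    by_contra! hxa
    linarith [hmin x (by simpa using hxa)]
  obtain ⟨M, hM⟩ := Finite.bddAbove_range f
  have := le_csInf ⟨M, by norm_num [prb_of_forall fun x => hM ⟨x, rfl⟩]⟩ hS
  simp only [mem_filter, mem_univ, true_and] at hx₀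
  exact absurd (this.trans ha) (not_le.2 hx₀)

end Median

theorem stmt_6 {n : ℕ} (f : (Fin n → Fin 2) → ℝ) (v : ℝ) (hv : 0 < v)
    (hcond : ∀ x, ∑ i, (max (-(f x - f (flipBit x i))) 0) ^ 2 ≤ v)
    (B : ℝ)
    (hB : IsGreatest (Set.range fun p : (Fin n → Fin 2) × Fin n =>
      |f p.1 - f (flipBit p.1 p.2)|) B)
    (a b : ℝ) (hab : a < b) (ha : quant f (1 / 2) ≤ a)
    (hb : 0 < prb fun x => b ≤ f x) :
    b - a ≤
      Real.sqrt ((72 / 5) * v * (prb fun x => a - B < f x ∧ f x < b) /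
          (prb fun x => b ≤ f x)) *
        (Real.log (Real.exp 2 / (2 * prb fun x => a - B < f x ∧ f x < b))) ^
          (-(1 / 2) : ℝ) := by
  have hBf : ∀ x i, |f x - f (flipBit x i)| ≤ B := fun x i => hB.2 ⟨(x, i), rfl⟩
  set g := fun x => max a (min b (f x))
  set p := prb fun x => a - B < f x ∧ f x < b
  set q := prb fun x => b ≤ f x
  have hvar : (b - a) ^ 2 * q * (1 / 2) ≤ 𝔼 x, g x ^ 2 - (𝔼 x, g x) ^ 2 := by
    refine le_trans ?_ (sq_mul_expect_mul_expect_le_var hab (A := fun x => b ≤ f x)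
      (L := fun x => f x ≤ a) (fun x hx => by simp [g, hx, hab.le])
      (fun x hx => by simp [g, hx, hx.trans hab.le]))
    rw [← prb_eq_expect, ← prb_eq_expect]
    gcongr
    exact half_le_prb_le_of_quant_le ha
  have hvar_pos : 0 < 𝔼 x, g x ^ 2 - (𝔼 x, g x) ^ 2 := hvar.trans_lt' (by positivity)
  have hW := sum_sq_expect_abs_martDiff_clip_le hab.le hBf hcond
  have hp : 0 < p := by
    have := (sum_sq_expect_abs_martDiff_pos hvar_pos).trans_le hW
    exact (prb_nonneg _).lt_of_ne (by rintro h; simp [← h] at this)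
  have hkey : (𝔼 x, g x ^ 2 - (𝔼 x, g x) ^ 2) *
      log ((𝔼 x, g x ^ 2 - (𝔼 x, g x) ^ 2) / (v * p ^ 2)) ≤ v * p := by
    linarith [falik_samorodnitsky hvar_pos hW, sum_expect_sq_sub_flipBit_clip_le hab.le hBf hcond]
  have hL := log_exp_two_div_pos hp (prb_le_one _)
  refine le_sqrt_div_mul_rpow_neg_half hb hL ?_
  nlinarith [mul_log_exp_two_div_le hv hp (prb_le_one _) hkey]
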